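/- arXiv:1610.04514 — 2 statements merged into one kernel-verified Lean document; each statement's English description precedes it below -/
import Mathlib

section
/- If f: ℝⁿ → ℝ is continuously differentiable with L-Lipschitz gradient, g: ℝᵐ → ℝ ∪ {∞} is proper, lsc, convex, T: ℝⁿ → ℝᵐ is linear, and μ > 0, then the proximal augmented Lagrangian L_μ(x;y) = f(x) + M_{μg}(Tx + μy) − (μ/2)‖y‖² has a Lipschitz continuous gradient as a function of (x, y). -/
/-!
Having a Lipschitz derivative is preserved by sums, scalar multiples and precomposition with
continuous linear maps, so it suffices to treat `f`, `‖·‖²` and the Moreau envelope `M`.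
For `M`, minimality of `p = prox v` along the segment towards any `z`, together with convexity
of `g`, gives the subgradient inequality `g p + ⟪v - p, z - p⟫ / μ ≤ g z`. It makes `prox` firmly
nonexpansive, and it squeezes `M w - M v - ⟪v - p, w - v⟫ / μ` between `0` and `‖w - v‖² / (2μ)`.
Hence `∇M v = (v - prox v) / μ`, which is `2 / μ`-Lipschitz.
-/

open Set Filter Topology Asymptotics
open scoped RealInnerProductSpace

section LipschitzFDeriv

variable {E E' G : Type*} [NormedAddCommGroup E] [NormedSpace ℝ E]
  [NormedAddCommGroup E'] [NormedSpace ℝ E'] [NormedAddCommGroup G] [NormedSpace ℝ G]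

def HasLipschitzFDeriv (φ : E → G) : Prop :=
  ∃ φ' : E → E →L[ℝ] G, (∀ x, HasFDerivAt φ (φ' x) x) ∧ ∃ K, LipschitzWith K φ'

namespace HasLipschitzFDeriv

variable {φ ψ : E → G}

theorem of_lipschitzWith_fderiv (hφ : Differentiable ℝ φ) {K : NNReal}
    (hK : LipschitzWith K (fderiv ℝ φ)) : HasLipschitzFDeriv φ :=
  ⟨fderiv ℝ φ, fun x => (hφ x).hasFDerivAt, K, hK⟩

theorem differentiable (h : HasLipschitzFDeriv φ) : Differentiable ℝ φ := by
  obtain ⟨φ', hφ', -⟩ := h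
  exact fun x => (hφ' x).differentiableAt

theorem exists_lipschitzWith_fderiv (h : HasLipschitzFDeriv φ) :
    ∃ K, LipschitzWith K (fderiv ℝ φ) := by
  obtain ⟨φ', hφ', K, hK⟩ := h
  rw [show fderiv ℝ φ = φ' from funext fun x => (hφ' x).fderiv]
  exact ⟨K, hK⟩

theorem add (hφ : HasLipschitzFDeriv φ) (hψ : HasLipschitzFDeriv ψ) :
    HasLipschitzFDeriv (φ + ψ) := by
  obtain ⟨φ', hφ', K, hK⟩ := hφ
  obtain ⟨ψ', hψ', K', hK'⟩ := hψ
  exact ⟨φ' + ψ', fun x => (hφ' x).add (hψ' x), _, hK.add hK'⟩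

theorem sub (hφ : HasLipschitzFDeriv φ) (hψ : HasLipschitzFDeriv ψ) :
    HasLipschitzFDeriv (φ - ψ) := by
  obtain ⟨φ', hφ', K, hK⟩ := hφ
  obtain ⟨ψ', hψ', K', hK'⟩ := hψ
  exact ⟨φ' - ψ', fun x => (hφ' x).sub (hψ' x), _, hK.sub hK'⟩

theorem const_smul (hφ : HasLipschitzFDeriv φ) (c : ℝ) : HasLipschitzFDeriv (c • φ) := by
  obtain ⟨φ', hφ', K, hK⟩ := hφ
  exact ⟨c • φ', fun x => (hφ' x).const_smul c, _, (lipschitzWith_smul c).comp hK⟩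

theorem comp_continuousLinearMap (hφ : HasLipschitzFDeriv φ) (A : E' →L[ℝ] E) :
    HasLipschitzFDeriv (φ ∘ A) := by
  obtain ⟨φ', hφ', K, hK⟩ := hφ
  refine ⟨fun x => (φ' (A x)).comp A, fun x => (hφ' (A x)).comp x A.hasFDerivAt, _,
    ((ContinuousLinearMap.compL ℝ E' E G).flip A).lipschitz.comp (hK.comp A.lipschitz)⟩

end HasLipschitzFDeriv

theorem hasLipschitzFDeriv_norm_sq {F : Type*} [NormedAddCommGroup F] [InnerProductSpace ℝ F] :
    HasLipschitzFDeriv (fun y : F => ‖y‖ ^ 2) :=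
  ⟨fun y => (2 • innerSL ℝ : F →L[ℝ] F →L[ℝ] ℝ) y,
    fun y => (hasStrictFDerivAt_norm_sq y).hasFDerivAt, _, ContinuousLinearMap.lipschitz _⟩

theorem hasFDerivAt_of_norm_sub_le_sq {φ : E → G} {φ' : E →L[ℝ] G} {x : E} (C : ℝ)
    (h : ∀ y, ‖φ y - φ x - φ' (y - x)‖ ≤ C * ‖y - x‖ ^ 2) : HasFDerivAt φ φ' x := by
  rw [hasFDerivAt_iff_isLittleO_nhds_zero]
  refine IsBigO.trans_isLittleO (g := fun u : E => ‖u‖ ^ 2) ?_ (isLittleO_norm_pow_id one_lt_two)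
  refine IsBigO.of_bound C (Eventually.of_forall fun v => ?_)
  simpa [abs_of_nonneg (sq_nonneg ‖v‖)] using h (x + v)

end LipschitzFDeriv

theorem nonpos_of_forall_le_mul {a b : ℝ} (h : ∀ t ∈ Ioc (0 : ℝ) 1, a ≤ t * b) : a ≤ 0 := by
  have hlim : Tendsto (fun t : ℝ => t * b) (𝓝[>] 0) (𝓝 0) := by
    simpa using (tendsto_id.mul_const b).mono_left (nhdsWithin_le_nhds (a := (0 : ℝ)))
  refine ge_of_tendsto hlim ?_
  filter_upwards [Ioc_mem_nhdsGT (zero_lt_one' ℝ)] with t ht using h t ht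

section Prox

variable {H : Type*} [NormedAddCommGroup H] [InnerProductSpace ℝ H]

def IsProxMap (g : H → ℝ) (μ : ℝ) (prox : H → H) : Prop :=
  ∀ v, IsMinOn (fun z => g z + ‖z - v‖ ^ 2 / (2 * μ)) univ (prox v)

/-- The envelope evaluated at a chosen minimiser: when `IsProxMap g μ prox` holds it is the
infimum of `z ↦ g z + ‖z - v‖ ^ 2 / (2 * μ)`. -/
noncomputable def moreauEnvelope (g : H → ℝ) (μ : ℝ) (prox : H → H) (v : H) : ℝ :=
  g (prox v) + ‖prox v - v‖ ^ 2 / (2 * μ)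

variable {g : H → ℝ} {μ : ℝ} {prox : H → H}

namespace IsProxMap

theorem add_inner_div_le (hprox : IsProxMap g μ prox) (hg : ConvexOn ℝ univ g) (hμ : 0 < μ)
    (v z : H) : g (prox v) + ⟪v - prox v, z - prox v⟫ / μ ≤ g z := by
  set p := prox v
  set d := z - p
  suffices g p - g z + ⟪v - p, d⟫ / μ ≤ 0 by linarith
  refine nonpos_of_forall_le_mul (b := ‖d‖ ^ 2 / (2 * μ)) fun t ⟨ht0, ht1⟩ => ?_
  have hmin : g p + ‖p - v‖ ^ 2 / (2 * μ) ≤ g (p + t • d) + ‖p + t • d - v‖ ^ 2 / (2 * μ) :=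
    hprox v (mem_univ _)
  have hconv : g (p + t • d) ≤ (1 - t) * g p + t * g z := by
    rw [show p + t • d = (1 - t) • p + t • z by simp only [d]; module]
    exact hg.2 (mem_univ p) (mem_univ z) (by linarith) ht0.le (by ring)
  have hnorm : ‖p + t • d - v‖ ^ 2 / (2 * μ)
      = ‖p - v‖ ^ 2 / (2 * μ) - t * (⟪v - p, d⟫ / μ) + t * (t * (‖d‖ ^ 2 / (2 * μ))) := by
    rw [show p + t • d - v = (p - v) + t • d by abel, norm_add_sq_real, real_inner_smul_right,
      norm_smul, Real.norm_of_nonneg ht0.le, ← neg_sub v p, inner_neg_left]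
    field_simp
    ring
  have : t * (g p - g z + ⟪v - p, d⟫ / μ) ≤ t * (t * (‖d‖ ^ 2 / (2 * μ))) := by
    linarith
  exact le_of_mul_le_mul_left this ht0

theorem norm_sub_sq_le_inner (hprox : IsProxMap g μ prox) (hg : ConvexOn ℝ univ g) (hμ : 0 < μ)
    (v w : H) : ‖prox v - prox w‖ ^ 2 ≤ ⟪v - w, prox v - prox w⟫ := by
  have hv := hprox.add_inner_div_le hg hμ v (prox w)
  have hw := hprox.add_inner_div_le hg hμ w (prox v)
  have hsum : ⟪v - prox v, prox w - prox v⟫ + ⟪w - prox w, prox v - prox w⟫ ≤ 0 := by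
    have h : (⟪v - prox v, prox w - prox v⟫ + ⟪w - prox w, prox v - prox w⟫) / μ ≤ 0 := by
      rw [add_div]; linarith
    rwa [div_le_iff₀ hμ, zero_mul] at h
  rw [← real_inner_self_eq_norm_sq]
  simp only [inner_sub_left, inner_sub_right, real_inner_comm] at hsum ⊢
  linarith

theorem lipschitzWith_one (hprox : IsProxMap g μ prox) (hg : ConvexOn ℝ univ g) (hμ : 0 < μ) :
    LipschitzWith 1 prox := by
  refine LipschitzWith.of_dist_le_mul fun v w => ?_
  rw [NNReal.coe_one, one_mul, dist_eq_norm, dist_eq_norm]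
  have h := (hprox.norm_sub_sq_le_inner hg hμ v w).trans (real_inner_le_norm _ _)
  nlinarith [norm_nonneg (prox v - prox w), norm_nonneg (v - w)]

theorem moreauEnvelope_sub_le (hprox : IsProxMap g μ prox) (v w : H) :
    moreauEnvelope g μ prox w - moreauEnvelope g μ prox v - ⟪v - prox v, w - v⟫ / μ
      ≤ ‖w - v‖ ^ 2 / (2 * μ) := by
  have hmin : moreauEnvelope g μ prox w ≤ g (prox v) + ‖prox v - w‖ ^ 2 / (2 * μ) :=
    hprox w (mem_univ (prox v))
  have hexpand : ‖prox v - w‖ ^ 2 = ‖prox v - v‖ ^ 2 + 2 * ⟪v - prox v, w - v⟫ + ‖w - v‖ ^ 2 := by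
    simp only [← real_inner_self_eq_norm_sq, inner_sub_left, inner_sub_right, real_inner_comm]
    ring
  rw [hexpand] at hmin
  have hv : moreauEnvelope g μ prox v = g (prox v) + ‖prox v - v‖ ^ 2 / (2 * μ) := rfl
  linarith [show (‖prox v - v‖ ^ 2 + 2 * ⟪v - prox v, w - v⟫ + ‖w - v‖ ^ 2) / (2 * μ) =
    ‖prox v - v‖ ^ 2 / (2 * μ) + ⟪v - prox v, w - v⟫ / μ + ‖w - v‖ ^ 2 / (2 * μ) by ring]

theorem inner_div_le_moreauEnvelope_sub (hprox : IsProxMap g μ prox) (hg : ConvexOn ℝ univ g)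
    (hμ : 0 < μ) (v w : H) :
    ⟪v - prox v, w - v⟫ / μ ≤ moreauEnvelope g μ prox w - moreauEnvelope g μ prox v := by
  have hsub := hprox.add_inner_div_le hg hμ v (prox w)
  have hexpand : ‖prox w - w‖ ^ 2 - ‖prox v - v‖ ^ 2 + 2 * ⟪v - prox v, prox w - prox v⟫
      - 2 * ⟪v - prox v, w - v⟫ = ‖(prox w - w) - (prox v - v)‖ ^ 2 := by
    simp only [← real_inner_self_eq_norm_sq, inner_sub_left, inner_sub_right, real_inner_comm]
    ring
  have hsq : 0 ≤ ‖(prox w - w) - (prox v - v)‖ ^ 2 / (2 * μ) := by positivity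
  rw [← hexpand] at hsq
  simp only [moreauEnvelope]
  linarith [show (‖prox w - w‖ ^ 2 - ‖prox v - v‖ ^ 2 + 2 * ⟪v - prox v, prox w - prox v⟫
      - 2 * ⟪v - prox v, w - v⟫) / (2 * μ) = ‖prox w - w‖ ^ 2 / (2 * μ) - ‖prox v - v‖ ^ 2 / (2 * μ)
      + ⟪v - prox v, prox w - prox v⟫ / μ - ⟪v - prox v, w - v⟫ / μ by ring]

theorem hasFDerivAt_moreauEnvelope (hprox : IsProxMap g μ prox) (hg : ConvexOn ℝ univ g)
    (hμ : 0 < μ) (v : H) :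
    HasFDerivAt (moreauEnvelope g μ prox) (μ⁻¹ • innerSL ℝ (v - prox v)) v := by
  refine hasFDerivAt_of_norm_sub_le_sq (1 / (2 * μ)) fun w => ?_
  have hupper := hprox.moreauEnvelope_sub_le v w
  have hlower := hprox.inner_div_le_moreauEnvelope_sub hg hμ v w
  have hsq : 0 ≤ ‖w - v‖ ^ 2 / (2 * μ) := by positivity
  rw [smul_apply, innerSL_apply_apply, smul_eq_mul, ← div_eq_inv_mul,
    Real.norm_eq_abs, abs_le, one_div_mul_eq_div]
  constructor <;> linarith

theorem hasLipschitzFDeriv_moreauEnvelope (hprox : IsProxMap g μ prox) (hg : ConvexOn ℝ univ g)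
    (hμ : 0 < μ) : HasLipschitzFDeriv (moreauEnvelope g μ prox) :=
  ⟨fun v => μ⁻¹ • innerSL ℝ (v - prox v), hprox.hasFDerivAt_moreauEnvelope hg hμ, _,
    (lipschitzWith_smul μ⁻¹).comp
      ((innerSL ℝ).lipschitz.comp (LipschitzWith.id.sub (hprox.lipschitzWith_one hg hμ)))⟩

end IsProxMap

end Prox

theorem lipschitzWith_fderiv_of_gradient {F : Type*} [NormedAddCommGroup F]
    [InnerProductSpace ℝ F] [CompleteSpace F] {f : F → ℝ} {K : NNReal}
    (h : LipschitzWith K (gradient f)) : LipschitzWith K (fderiv ℝ f) := by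
  have hfderiv : fderiv ℝ f = InnerProductSpace.toDual ℝ F ∘ gradient f :=
    funext fun x => ((InnerProductSpace.toDual ℝ F).apply_symm_apply _).symm
  rwa [hfderiv, (InnerProductSpace.toDual ℝ F).isometry.lipschitzWith_iff]

theorem proximal_augmented_lagrangian_lipschitz_gradient_general
    {n m : ℕ} (f : EuclideanSpace ℝ (Fin n) → ℝ) (hf : ContDiff ℝ 1 f)
    (L : NNReal) (hfL : LipschitzWith L (fun x => gradient f x))
    (g : EuclideanSpace ℝ (Fin m) → ℝ)
    (hg_conv : ConvexOn ℝ Set.univ g)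
    (T : EuclideanSpace ℝ (Fin n) →ₗ[ℝ] EuclideanSpace ℝ (Fin m))
    (μ : ℝ) (hμ : 0 < μ)
    (prox : EuclideanSpace ℝ (Fin m) → EuclideanSpace ℝ (Fin m))
    (hprox : ∀ v, IsMinOn (fun z => g z + ‖z - v‖ ^ 2 / (2 * μ)) Set.univ (prox v))
    (M : EuclideanSpace ℝ (Fin m) → ℝ)
    (hM : ∀ v, M v = g (prox v) + ‖prox v - v‖ ^ 2 / (2 * μ))
    (Lag : EuclideanSpace ℝ (Fin n) × EuclideanSpace ℝ (Fin m) → ℝ)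
    (hLag : ∀ p, Lag p = f p.1 + M (T p.1 + μ • p.2) - μ / 2 * ‖p.2‖ ^ 2) :
    Differentiable ℝ Lag ∧ ∃ K : NNReal, LipschitzWith K (fderiv ℝ Lag) := by
  let E := EuclideanSpace ℝ (Fin n)
  let F := EuclideanSpace ℝ (Fin m)
  let A : E × F →L[ℝ] F :=
    T.toContinuousLinearMap.comp (ContinuousLinearMap.fst ℝ E F) + μ • ContinuousLinearMap.snd ℝ E F
  have hLag_eq : Lag = f ∘ ContinuousLinearMap.fst ℝ E F + moreauEnvelope g μ prox ∘ A
      - (μ / 2) • ((fun y : F => ‖y‖ ^ 2) ∘ ContinuousLinearMap.snd ℝ E F) := by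
    funext p
    simp [hLag, hM, moreauEnvelope, A]
  have hf' : HasLipschitzFDeriv f :=
    .of_lipschitzWith_fderiv (hf.differentiable one_ne_zero) (lipschitzWith_fderiv_of_gradient hfL)
  have hLip : HasLipschitzFDeriv Lag := by
    rw [hLag_eq]
    have hM' := IsProxMap.hasLipschitzFDeriv_moreauEnvelope hprox hg_conv hμ
    exact ((hf'.comp_continuousLinearMap _).add (hM'.comp_continuousLinearMap A)).sub
      ((hasLipschitzFDeriv_norm_sq.comp_continuousLinearMap _).const_smul _)
  exact ⟨hLip.differentiable, hLip.exists_lipschitzWith_fderiv⟩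

/-- If `f` is `C¹` with `L`-Lipschitz gradient, `g` proper lsc convex,
`T` linear and `μ > 0`, then the proximal augmented Lagrangian
`L_μ(x;y) = f x + M_{μg}(Tx + μy) - (μ/2)‖y‖²` has a Lipschitz continuous
gradient (derivative) as a function of `(x, y)`. -/
theorem proximal_augmented_lagrangian_lipschitz_gradient
    {n m : ℕ} (f : EuclideanSpace ℝ (Fin n) → ℝ) (hf : ContDiff ℝ 1 f)
    (L : NNReal) (hfL : LipschitzWith L (fun x => gradient f x))
    (g : EuclideanSpace ℝ (Fin m) → ℝ)
    (hg_conv : ConvexOn ℝ Set.univ g) (hg_lsc : LowerSemicontinuous g)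
    (T : EuclideanSpace ℝ (Fin n) →ₗ[ℝ] EuclideanSpace ℝ (Fin m))
    (μ : ℝ) (hμ : 0 < μ)
    (prox : EuclideanSpace ℝ (Fin m) → EuclideanSpace ℝ (Fin m))
    (hprox : ∀ v, IsMinOn (fun z => g z + ‖z - v‖ ^ 2 / (2 * μ)) Set.univ (prox v))
    (M : EuclideanSpace ℝ (Fin m) → ℝ)
    (hM : ∀ v, M v = g (prox v) + ‖prox v - v‖ ^ 2 / (2 * μ))
    (Lag : EuclideanSpace ℝ (Fin n) × EuclideanSpace ℝ (Fin m) → ℝ)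
    (hLag : ∀ p, Lag p = f p.1 + M (T p.1 + μ • p.2) - μ / 2 * ‖p.2‖ ^ 2) :
    Differentiable ℝ Lag ∧ ∃ K : NNReal, LipschitzWith K (fderiv ℝ Lag) :=
  proximal_augmented_lagrangian_lipschitz_gradient_general f hf L hfL g hg_conv T μ hμ prox hprox M
    hM Lag hLag
end

section
/- Let f: ℝⁿ → ℝ be convex and C¹ with L_f-Lipschitz gradient, g proper lsc convex, T ∈ ℝ^{m×n}, μ > 0, and let (x*, y*) be a primal-dual optimal pair. Along solutions of the gradient flow ẋ = −(∇f(x) + Tᵀ∇M_{μg}(Tx + μy)), ẏ = μ(∇M_{μg}(Tx + μy) − y), the function V(x,y) = (1/2)‖x − x*‖² + (1/2)‖y − y*‖² satisfies V̇ ≤ −(1/L_f)‖∇f(x) − ∇f(x*)‖² − (1/μ)‖T(x − x*) − z̃‖², where z̃ = prox_{μg}(Tx + μy) − prox_{μg}(Tx* + μy*). In particular V̇ ≤ 0. -/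
/-!
Along the flow, `V̇ = ⟪x - x*, ẋ⟫ + ⟪y - y*, ẏ⟫`. Subtracting the optimality conditions from the
vector field and writing `v = Tx + μy`, `v* = Tx* + μy*`, this becomes
`-⟪x - x*, ∇f x - ∇f x*⟫ - (1/μ)‖T(x - x*) - z̃‖² - (1/μ)⟪z̃, (v - prox v) - (v* - prox v*)⟫`.
The first term is at most `-(1/L_f)‖∇f x - ∇f x*‖²` by the Baillon–Haddad cocoercivity of the
gradient of a convex function with Lipschitz gradient, and the last is nonpositive by firm
nonexpansiveness of the proximal map, which follows from its variational inequality
`⟪v - prox v, z - prox v⟫ ≤ μ (g z - g (prox v))`.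
-/

open scoped RealInnerProductSpace NNReal

open Set Filter Topology

section SmoothConvex

variable {E : Type*} [NormedAddCommGroup E] [InnerProductSpace ℝ E] [CompleteSpace E] {f : E → ℝ}

theorem DifferentiableAt.hasDerivAt_comp_add_smul {a d : E} {t : ℝ}
    (hf : DifferentiableAt ℝ f (a + t • d)) :
    HasDerivAt (fun s : ℝ => f (a + s • d)) ⟪gradient f (a + t • d), d⟫ t := by
  have hline : HasDerivAt (fun s : ℝ => a + s • d) d t := by
    simpa using ((hasDerivAt_id t).smul_const d).const_add a
  rw [inner_gradient_left]
  exact hf.hasFDerivAt.comp_hasDerivAt t hline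

theorem ConvexOn.add_inner_gradient_le (hconv : ConvexOn ℝ univ f) {a : E}
    (hf : DifferentiableAt ℝ f a) (b : E) :
    f a + ⟪gradient f a, b - a⟫ ≤ f b := by
  have hline : ConvexOn ℝ univ (fun t : ℝ => f (a + t • (b - a))) := by
    simpa [Function.comp_def, AffineMap.lineMap_apply_module', add_comm]
      using hconv.comp_affineMap (AffineMap.lineMap a b)
  have hderiv : HasDerivAt (fun t : ℝ => f (a + t • (b - a))) ⟪gradient f a, b - a⟫ 0 := by
    simpa using DifferentiableAt.hasDerivAt_comp_add_smul (d := b - a) (t := 0) (by simpa using hf)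
  have := hline.le_slope_of_hasDerivAt (mem_univ 0) (mem_univ 1) zero_lt_one hderiv
  simp only [slope_def_field, sub_zero, div_one, zero_smul, one_smul, add_zero,
    add_sub_cancel] at this
  linarith

theorem le_add_inner_gradient_add_sq {K : ℝ≥0} (hf : Differentiable ℝ f)
    (hK : LipschitzWith K (gradient f)) (a b : E) :
    f b ≤ f a + ⟪gradient f a, b - a⟫ + K / 2 * ‖b - a‖ ^ 2 := by
  set d := b - a
  let ψ : ℝ → ℝ := fun t => f (a + t • d) - t * ⟪gradient f a, d⟫ - K / 2 * t ^ 2 * ‖d‖ ^ 2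
  have hψ : ∀ t, HasDerivAt ψ
      (⟪gradient f (a + t • d), d⟫ - ⟪gradient f a, d⟫ - K * t * ‖d‖ ^ 2) t := by
    intro t
    have hq : HasDerivAt (fun s : ℝ => K / 2 * s ^ 2 * ‖d‖ ^ 2) (K * t * ‖d‖ ^ 2) t := by
      refine (((hasDerivAt_pow 2 t).const_mul ((K : ℝ) / 2)).mul_const (‖d‖ ^ 2)).congr_deriv ?_
      push_cast
      ring
    exact (((hf _).hasDerivAt_comp_add_smul).sub
      ((hasDerivAt_id t).mul_const _)).sub hq |>.congr_deriv (by simp)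
  have hψ' : ∀ t ∈ interior (Icc (0 : ℝ) 1), deriv ψ t ≤ 0 := by
    intro t ht
    rw [interior_Icc] at ht
    have hlip : ‖gradient f (a + t • d) - gradient f a‖ ≤ K * (t * ‖d‖) := by
      simpa [dist_eq_norm, norm_smul, abs_of_pos ht.1] using hK.dist_le_mul (a + t • d) a
    have := real_inner_le_norm (gradient f (a + t • d) - gradient f a) d
    rw [inner_sub_left] at this
    rw [(hψ t).deriv]
    nlinarith [mul_le_mul_of_nonneg_right hlip (norm_nonneg d)]
  have hanti : AntitoneOn ψ (Icc 0 1) :=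
    antitoneOn_of_deriv_nonpos (convex_Icc 0 1)
      (HasDerivAt.continuousOn fun t _ => hψ t)
      (fun t _ => (hψ t).differentiableAt.differentiableWithinAt) hψ'
  have := hanti (left_mem_Icc.2 zero_le_one) (right_mem_Icc.2 zero_le_one) zero_le_one
  simp only [ψ, d, zero_smul, one_smul, add_zero, add_sub_cancel] at this
  linarith

theorem ConvexOn.add_inner_gradient_add_sq_le (hconv : ConvexOn ℝ univ f)
    (hf : Differentiable ℝ f) {K : ℝ≥0} (hK : LipschitzWith K (gradient f)) (a b : E) :
    f a + ⟪gradient f a, b - a⟫ + (2 * (K : ℝ))⁻¹ * ‖gradient f b - gradient f a‖ ^ 2 ≤ f b := by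
  set Δ := gradient f b - gradient f a
  -- a gradient step from `b` for `f - ⟪∇f a, ·⟫`, which is minimal at `a`
  set c := b - (K : ℝ)⁻¹ • Δ with hc
  have h1 := hconv.add_inner_gradient_le (hf a) c
  have h2 := le_add_inner_gradient_add_sq hf hK b c
  have hca : c - a = (b - a) - (K : ℝ)⁻¹ • Δ := by rw [hc]; abel
  have hcb : c - b = -((K : ℝ)⁻¹ • Δ) := by rw [hc]; abel
  rw [hca, inner_sub_right, real_inner_smul_right] at h1
  rw [hcb, inner_neg_right, real_inner_smul_right, norm_neg, norm_smul, Real.norm_eq_abs,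
    mul_pow, sq_abs] at h2
  have hΔ : ⟪gradient f b, Δ⟫ - ⟪gradient f a, Δ⟫ = ‖Δ‖ ^ 2 := by
    rw [← inner_sub_left, real_inner_self_eq_norm_sq]
  -- also for `K = 0`, since `0⁻¹ = 0`
  have hK2 : (K : ℝ) * (K : ℝ)⁻¹ ^ 2 = (K : ℝ)⁻¹ := by
    rw [sq, ← mul_assoc]
    simpa using inv_mul_mul_self (K : ℝ)⁻¹
  linear_combination h1 + h2 - (K : ℝ)⁻¹ * hΔ + ‖Δ‖ ^ 2 / 2 * hK2

theorem ConvexOn.inv_mul_sq_norm_sub_gradient_le_inner (hconv : ConvexOn ℝ univ f)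
    (hf : Differentiable ℝ f) {K : ℝ≥0} (hK : LipschitzWith K (gradient f)) (a b : E) :
    (K : ℝ)⁻¹ * ‖gradient f b - gradient f a‖ ^ 2 ≤ ⟪gradient f b - gradient f a, b - a⟫ := by
  have hab := hconv.add_inner_gradient_add_sq_le hf hK a b
  have hba := hconv.add_inner_gradient_add_sq_le hf hK b a
  rw [norm_sub_rev, ← neg_sub b a, inner_neg_right] at hba
  rw [inner_sub_left]
  linear_combination hab + hba

end SmoothConvex

section Prox

variable {F : Type*} [NormedAddCommGroup F] [InnerProductSpace ℝ F] {g : F → ℝ} {μ : ℝ}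

theorem ConvexOn.inner_sub_le_of_isMinOn (hg : ConvexOn ℝ univ g) (hμ : 0 < μ) {v p : F}
    (hp : IsMinOn (fun z => g z + ‖z - v‖ ^ 2 / (2 * μ)) univ p) (z : F) :
    ⟪v - p, z - p⟫ ≤ μ * (g z - g p) := by
  have hsegment : ∀ t ∈ Ioc (0 : ℝ) 1,
      ⟪v - p, z - p⟫ ≤ μ * (g z - g p) + t * (‖z - p‖ ^ 2 / 2) := by
    rintro t ⟨ht0, ht1⟩
    have hmin := isMinOn_iff.mp hp (p + t • (z - p)) (mem_univ _)
    have hconv : g (p + t • (z - p)) ≤ (1 - t) * g p + t * g z := by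
      have h := hg.2 (mem_univ p) (mem_univ z) (sub_nonneg.2 ht1) ht0.le (sub_add_cancel 1 t)
      rwa [smul_eq_mul, smul_eq_mul, show (1 - t) • p + t • z = p + t • (z - p) by module] at h
    have hnorm : ‖p + t • (z - p) - v‖ ^ 2
        = ‖p - v‖ ^ 2 - 2 * t * ⟪v - p, z - p⟫ + t ^ 2 * ‖z - p‖ ^ 2 := by
      rw [show p + t • (z - p) - v = -(v - p) + t • (z - p) by abel, norm_add_sq_real,
        inner_neg_left, real_inner_smul_right, norm_neg, norm_smul, Real.norm_eq_abs, mul_pow,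
        sq_abs, norm_sub_rev]
      ring
    rw [hnorm] at hmin
    have hscaled : t * ⟪v - p, z - p⟫ ≤ t * (μ * (g z - g p) + t * (‖z - p‖ ^ 2 / 2)) := by
      field_simp at hmin
      linarith [mul_le_mul_of_nonneg_left hconv (by positivity : (0 : ℝ) ≤ 2 * μ)]
    exact le_of_mul_le_mul_left hscaled ht0
  have hlim : Tendsto (fun t : ℝ => μ * (g z - g p) + t * (‖z - p‖ ^ 2 / 2)) (𝓝[>] 0)
      (𝓝 (μ * (g z - g p))) := by
    have hcont : Continuous fun t : ℝ => μ * (g z - g p) + t * (‖z - p‖ ^ 2 / 2) := by fun_prop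
    simpa using (hcont.tendsto 0).mono_left nhdsWithin_le_nhds
  exact ge_of_tendsto hlim (eventually_of_mem (Ioc_mem_nhdsGT zero_lt_one) hsegment)

theorem ConvexOn.inner_sub_sub_nonneg_of_isMinOn (hg : ConvexOn ℝ univ g) (hμ : 0 < μ)
    {v w p q : F} (hp : IsMinOn (fun z => g z + ‖z - v‖ ^ 2 / (2 * μ)) univ p)
    (hq : IsMinOn (fun z => g z + ‖z - w‖ ^ 2 / (2 * μ)) univ q) :
    0 ≤ ⟪p - q, (v - p) - (w - q)⟫ := by
  have hpq := hg.inner_sub_le_of_isMinOn hμ hp q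
  have hqp := hg.inner_sub_le_of_isMinOn hμ hq p
  rw [← neg_sub p q, inner_neg_right, real_inner_comm] at hpq
  rw [real_inner_comm] at hqp
  rw [inner_sub_right]
  linarith

end Prox

section Flow

variable {E F : Type*} [NormedAddCommGroup E] [InnerProductSpace ℝ E]
  [NormedAddCommGroup F] [InnerProductSpace ℝ F]

theorem HasDerivAt.half_norm_sq_sub {x : ℝ → E} {x' : E} {t : ℝ} (hx : HasDerivAt x x' t)
    (xs : E) : HasDerivAt (fun s => 1 / 2 * ‖x s - xs‖ ^ 2) ⟪x t - xs, x'⟫ t :=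
  ((hx.sub_const xs).norm_sq.const_mul (1 / 2)).congr_deriv (by ring)

theorem inner_primal_dual_field_eq [CompleteSpace E] [CompleteSpace F] (T : E →L[ℝ] F) {μ : ℝ}
    (hμ : μ ≠ 0) {xs gxs : E} {ys : F}
    (hopt : gxs + ContinuousLinearMap.adjoint T ys = 0) (x gx : E) (y p : F) :
    ⟪x - xs, -(gx + ContinuousLinearMap.adjoint T ((1 / μ) • (T x + μ • y - p)))⟫
        + ⟪y - ys, μ • ((1 / μ) • (T x + μ • y - p) - y)⟫
      = -⟪x - xs, gx - gxs⟫ - (1 / μ) * ‖T (x - xs) - (p - T xs)‖ ^ 2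
        - (1 / μ) * ⟪p - T xs, T (x - xs) + μ • (y - ys) - (p - T xs)⟫ := by
  have hprimal : gx + ContinuousLinearMap.adjoint T ((1 / μ) • (T x + μ • y - p))
      = (gx - gxs) + ContinuousLinearMap.adjoint T
          ((1 / μ) • (T (x - xs) + μ • (y - ys) - (p - T xs))) := by
    have hshift : T (x - xs) + μ • (y - ys) - (p - T xs) = (T x + μ • y - p) - μ • ys := by
      rw [map_sub, smul_sub]
      abel
    rw [hshift, smul_sub (1 / μ) (T x + μ • y - p), smul_smul, one_div_mul_cancel hμ, one_smul,
      map_sub, eq_neg_of_add_eq_zero_right hopt]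
    abel
  have hdual : μ • ((1 / μ) • (T x + μ • y - p) - y) = T (x - xs) - (p - T xs) := by
    rw [smul_sub, smul_smul, mul_one_div_cancel hμ, one_smul, map_sub]
    abel
  rw [hprimal, hdual]
  generalize x - xs = a, gx - gxs = Δ, y - ys = b, p - T xs = z
  simp only [inner_neg_right, inner_add_right, inner_sub_right,
    ContinuousLinearMap.adjoint_inner_right, real_inner_smul_right, norm_sub_sq_real,
    real_inner_self_eq_norm_sq, real_inner_comm (T a) b, real_inner_comm z]
  field_simp
  ring

end Flow

theorem gradient_flow_lyapunov_decrease_general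
    {n m : ℕ} (f : EuclideanSpace ℝ (Fin n) → ℝ)
    (hf_conv : ConvexOn ℝ Set.univ f) (hf : ContDiff ℝ 1 f)
    (Lf : ℝ) (hLf : 0 < Lf)
    (hfL : LipschitzWith (Real.toNNReal Lf) (fun x => gradient f x))
    (g : EuclideanSpace ℝ (Fin m) → ℝ)
    (hg_conv : ConvexOn ℝ Set.univ g)
    (T : EuclideanSpace ℝ (Fin n) →L[ℝ] EuclideanSpace ℝ (Fin m))
    (μ : ℝ) (hμ : 0 < μ)
    (prox : EuclideanSpace ℝ (Fin m) → EuclideanSpace ℝ (Fin m))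
    (hprox : ∀ v, IsMinOn (fun z => g z + ‖z - v‖ ^ 2 / (2 * μ)) Set.univ (prox v))
    (xs : EuclideanSpace ℝ (Fin n)) (ys : EuclideanSpace ℝ (Fin m))
    -- optimality of the primal-dual pair (x*, y*):
    (hopt1 : gradient f xs + ContinuousLinearMap.adjoint T ys = 0)
    (hopt2 : T xs = prox (T xs + μ • ys))
    -- a solution (x(t), y(t)) of the gradient flow dynamics:
    (x : ℝ → EuclideanSpace ℝ (Fin n)) (y : ℝ → EuclideanSpace ℝ (Fin m))
    (hx : ∀ t, HasDerivAt x
      (-(gradient f (x t) + ContinuousLinearMap.adjoint T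
        ((1 / μ) • (T (x t) + μ • y t - prox (T (x t) + μ • y t))))) t)
    (hy : ∀ t, HasDerivAt y
      (μ • ((1 / μ) • (T (x t) + μ • y t - prox (T (x t) + μ • y t)) - y t)) t)
    (V : ℝ → ℝ)
    (hV : ∀ t, V t = 1 / 2 * ‖x t - xs‖ ^ 2 + 1 / 2 * ‖y t - ys‖ ^ 2) :
    ∀ t, deriv V t ≤
      -(1 / Lf) * ‖gradient f (x t) - gradient f xs‖ ^ 2
      - (1 / μ) * ‖T (x t - xs) - (prox (T (x t) + μ • y t) - prox (T xs + μ • ys))‖ ^ 2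
      ∧ deriv V t ≤ 0 := by
  intro t
  set p := prox (T (x t) + μ • y t)
  have hV' := (((hx t).half_norm_sq_sub xs).add ((hy t).half_norm_sq_sub ys)).congr_of_eventuallyEq
    (.of_forall hV)
  have hcoco := hf_conv.inv_mul_sq_norm_sub_gradient_le_inner
    (hf.differentiable one_ne_zero) hfL xs (x t)
  rw [Real.coe_toNNReal Lf hLf.le, ← one_div, real_inner_comm] at hcoco
  have hfirm : 0 ≤ ⟪p - T xs, T (x t - xs) + μ • (y t - ys) - (p - T xs)⟫ := by
    have h := hg_conv.inner_sub_sub_nonneg_of_isMinOn hμ (hprox (T (x t) + μ • y t))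
      (hprox (T xs + μ • ys))
    rw [← hopt2] at h
    convert h using 2
    rw [map_sub, smul_sub]
    abel
  have hdecrease : deriv V t ≤ -(1 / Lf) * ‖gradient f (x t) - gradient f xs‖ ^ 2
      - (1 / μ) * ‖T (x t - xs) - (p - T xs)‖ ^ 2 := by
    rw [hV'.deriv, inner_primal_dual_field_eq T hμ.ne' hopt1]
    linarith [mul_nonneg (one_div_nonneg.2 hμ.le) hfirm]
  rw [← hopt2]
  refine ⟨hdecrease, hdecrease.trans ?_⟩
  linarith [mul_nonneg (one_div_nonneg.2 hLf.le) (sq_nonneg ‖gradient f (x t) - gradient f xs‖),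
    mul_nonneg (one_div_nonneg.2 hμ.le) (sq_nonneg ‖T (x t - xs) - (p - T xs)‖)]

/-- Along solutions of the primal-descent dual-ascent gradient flow
`ẋ = -(∇f x + Tᵀ ∇M_{μg}(Tx + μy))`, `ẏ = μ(∇M_{μg}(Tx + μy) - y)`, with
`∇M_{μg}(v) = (1/μ)(v - prox v)`, the Lyapunov function
`V = ½‖x - x*‖² + ½‖y - y*‖²` satisfies
`V̇ ≤ -(1/L_f)‖∇f x - ∇f x*‖² - (1/μ)‖T(x - x*) - z̃‖²` where
`z̃ = prox(Tx + μy) - prox(Tx* + μy*)`; in particular `V̇ ≤ 0`. -/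
theorem gradient_flow_lyapunov_decrease
    {n m : ℕ} (f : EuclideanSpace ℝ (Fin n) → ℝ)
    (hf_conv : ConvexOn ℝ Set.univ f) (hf : ContDiff ℝ 1 f)
    (Lf : ℝ) (hLf : 0 < Lf)
    (hfL : LipschitzWith (Real.toNNReal Lf) (fun x => gradient f x))
    (g : EuclideanSpace ℝ (Fin m) → ℝ)
    (hg_conv : ConvexOn ℝ Set.univ g) (hg_lsc : LowerSemicontinuous g)
    (T : EuclideanSpace ℝ (Fin n) →L[ℝ] EuclideanSpace ℝ (Fin m))
    (μ : ℝ) (hμ : 0 < μ)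
    (prox : EuclideanSpace ℝ (Fin m) → EuclideanSpace ℝ (Fin m))
    (hprox : ∀ v, IsMinOn (fun z => g z + ‖z - v‖ ^ 2 / (2 * μ)) Set.univ (prox v))
    (xs : EuclideanSpace ℝ (Fin n)) (ys : EuclideanSpace ℝ (Fin m))
    -- optimality of the primal-dual pair (x*, y*):
    (hopt1 : gradient f xs + ContinuousLinearMap.adjoint T ys = 0)
    (hopt2 : T xs = prox (T xs + μ • ys))
    -- a solution (x(t), y(t)) of the gradient flow dynamics:
    (x : ℝ → EuclideanSpace ℝ (Fin n)) (y : ℝ → EuclideanSpace ℝ (Fin m))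
    (hx : ∀ t, HasDerivAt x
      (-(gradient f (x t) + ContinuousLinearMap.adjoint T
        ((1 / μ) • (T (x t) + μ • y t - prox (T (x t) + μ • y t))))) t)
    (hy : ∀ t, HasDerivAt y
      (μ • ((1 / μ) • (T (x t) + μ • y t - prox (T (x t) + μ • y t)) - y t)) t)
    (V : ℝ → ℝ)
    (hV : ∀ t, V t = 1 / 2 * ‖x t - xs‖ ^ 2 + 1 / 2 * ‖y t - ys‖ ^ 2) :
    ∀ t, deriv V t ≤
      -(1 / Lf) * ‖gradient f (x t) - gradient f xs‖ ^ 2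
      - (1 / μ) * ‖T (x t - xs) - (prox (T (x t) + μ • y t) - prox (T xs + μ • ys))‖ ^ 2
      ∧ deriv V t ≤ 0 :=
  gradient_flow_lyapunov_decrease_general f hf_conv hf Lf hLf hfL g hg_conv T μ hμ prox hprox xs ys
    hopt1 hopt2 x y hx hy V hV
end
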